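/- Let k ≥ 1 and let τ = (τ_n)_{n≥0} be a directive sequence of morphisms satisfying Property (P_k). Then the S-adic subshift (X_τ, S) has topological entropy zero. -/

import Mathlib

open Filter Topology MeasureTheory

namespace AsympSOE

/-! ### Subshift basics -/

/-- Shift of a bi-infinite sequence by `n` (the `n`-th power of the left shift `S`). -/
def SShift {A : Type*} (n : ℤ) (x : ℤ → A) : ℤ → A := fun i => x (i + n)

/-- Two bi-infinite sequences are (left) asymptotic: they agree on a left half-line. -/
def SAsymp {A : Type*} (x y : ℤ → A) : Prop := ∃ ℓ : ℤ, ∀ i < ℓ, x i = y i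

/-- `y` belongs to the shift-orbit of `x`. -/
def SSameOrbit {A : Type*} (x y : ℤ → A) : Prop := ∃ n : ℤ, SShift n x = y

/-- The shift-orbits of `x` and `y` are asymptotic. -/
def SOrbAsymp {A : Type*} (x y : ℤ → A) : Prop :=
  ∃ n n' : ℤ, SAsymp (SShift n x) (SShift n' y)

/-- `C` is an asymptotic component of the subshift `X`: it is the `SOrbAsymp`-class of
some `x ∈ X` and contains at least two distinct orbits. -/
def SIsAsymComponent {A : Type*} (X : Set (ℤ → A)) (C : Set (ℤ → A)) : Prop :=
  ∃ x ∈ X, C = {y ∈ X | SOrbAsymp x y} ∧ ∃ y ∈ X, SOrbAsymp x y ∧ ¬ SSameOrbit x y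

/-- A subshift: a nonempty closed shift-invariant set of bi-infinite sequences. -/
def IsSubshift {A : Type*} [TopologicalSpace A] (X : Set (ℤ → A)) : Prop :=
  X.Nonempty ∧ IsClosed X ∧ (∀ x ∈ X, SShift 1 x ∈ X) ∧ (∀ x ∈ X, SShift (-1) x ∈ X)

/-- A minimal subshift: every orbit is dense. -/
def IsMinimalSubshift {A : Type*} [TopologicalSpace A] (X : Set (ℤ → A)) : Prop :=
  IsSubshift X ∧ ∀ x ∈ X, ∀ y ∈ X, y ∈ closure {z | SSameOrbit x z}

/-- The words of length `n` appearing in points of `X`. -/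
def langOf {A : Type*} (X : Set (ℤ → A)) (n : ℕ) : Set (List A) :=
  {w | ∃ x ∈ X, ∃ a : ℤ, (List.range n).map (fun t => x (a + t)) = w}

/-- The complexity function of a subshift. -/
noncomputable def complexityOf {A : Type*} (X : Set (ℤ → A)) (n : ℕ) : ℕ :=
  (langOf X n).ncard

/-- A Toeplitz sequence. -/
def IsToeplitzSeq {A : Type*} (x : ℤ → A) : Prop :=
  ∀ n : ℤ, ∃ p : ℕ, 0 < p ∧ ∀ k : ℤ, x (n + k * p) = x n

/-- A Toeplitz subshift: the shift-orbit closure of a Toeplitz sequence. -/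
def IsToeplitzSubshift {A : Type*} [TopologicalSpace A] (X : Set (ℤ → A)) : Prop :=
  ∃ x : ℤ → A, IsToeplitzSeq x ∧ X = closure {z | SSameOrbit x z}

/-! ### General topological dynamical systems -/

/-- The (full) orbit of `x` under the invertible map `T`. -/
def orbitEq {X : Type*} (T : Equiv.Perm X) (x : X) : Set X := {y | ∃ n : ℤ, (T ^ n) x = y}

/-- `x` and `y` are (left) asymptotic for `T`: `dist (T⁻ⁿ x) (T⁻ⁿ y) → 0` as `n → ∞`. -/
def MAsymp {X : Type*} [MetricSpace X] (T : Equiv.Perm X) (x y : X) : Prop :=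
  Tendsto (fun n : ℕ => dist ((T ^ (-(n : ℤ))) x) ((T ^ (-(n : ℤ))) y)) atTop (𝓝 0)

/-- The orbits of `x` and `y` are asymptotic. -/
def MOrbAsymp {X : Type*} [MetricSpace X] (T : Equiv.Perm X) (x y : X) : Prop :=
  ∃ n n' : ℤ, MAsymp T ((T ^ n) x) ((T ^ n') y)

/-- `C` is an asymptotic component of the system `(X, T)`: the `MOrbAsymp`-class of some
point `x`, containing at least two distinct orbits. -/
def MIsAsymComponent {X : Type*} [MetricSpace X] (T : Equiv.Perm X) (C : Set X) : Prop :=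
  ∃ x, C = {y | MOrbAsymp T x y} ∧ ∃ y, MOrbAsymp T x y ∧ y ∉ orbitEq T x

/-- A minimal Cantor system: the compact metric space `X` is a Cantor space (nonempty,
totally disconnected, without isolated points) and every `T`-orbit is dense. -/
def IsMinimalCantor {X : Type*} [MetricSpace X] (T : X ≃ₜ X) : Prop :=
  CompactSpace X ∧ TotallyDisconnectedSpace X ∧ Nonempty X ∧
    (∀ x : X, Filter.NeBot (𝓝[≠] x)) ∧ ∀ x : X, Dense (orbitEq T.toEquiv x)

/-- Strong orbit equivalence of the systems `(X, T)` and `(Y, S)`: an orbit equivalence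
whose two orbit cocycles each have at most one point of discontinuity. -/
def IsSOE {X Y : Type*} [TopologicalSpace X] [TopologicalSpace Y]
    (T : X ≃ₜ X) (S : Y ≃ₜ Y) : Prop :=
  ∃ φ : X ≃ₜ Y,
    (∀ x : X, φ '' orbitEq T.toEquiv x = orbitEq S.toEquiv (φ x)) ∧
    ∃ α β : X → ℤ,
      (∀ x, φ (T x) = (S.toEquiv ^ α x) (φ x)) ∧
      (∀ x, φ ((T.toEquiv ^ β x) x) = S (φ x)) ∧
      {x | ¬ContinuousAt α x}.Subsingleton ∧
      {x | ¬ContinuousAt β x}.Subsingleton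

/-- The automorphism group of a system `(Y, S)`, as a subgroup of the permutation group:
the bi-continuous bijections commuting with `S`. -/
def autGroup {Y : Type*} [TopologicalSpace Y] (S : Y ≃ₜ Y) : Subgroup (Equiv.Perm Y) where
  carrier := {φ | Continuous φ ∧ Continuous φ.symm ∧ ∀ y, φ (S y) = S (φ y)}
  one_mem' := ⟨continuous_id, continuous_id, fun _ => rfl⟩
  mul_mem' := by
    rintro a b ⟨ha1, ha2, ha3⟩ ⟨hb1, hb2, hb3⟩
    refine ⟨ha1.comp hb1, hb2.comp ha2, fun y => ?_⟩
    simp only [Equiv.Perm.mul_apply, hb3, ha3]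
  inv_mem' := by
    rintro a ⟨ha1, ha2, ha3⟩
    refine ⟨by simpa using ha2, by rw [Equiv.Perm.inv_def, Equiv.symm_symm]; exact ha1, fun y => ?_⟩
    have h : a (S (a⁻¹ y)) = S y := by
      rw [ha3 (a⁻¹ y), Equiv.Perm.inv_def, Equiv.apply_symm_apply]
    calc a⁻¹ (S y) = a⁻¹ (a (S (a⁻¹ y))) := by rw [h]
    _ = S (a⁻¹ y) := by rw [Equiv.Perm.inv_def, Equiv.symm_apply_apply]

/-! ### S-adic subshifts and Property (P_k) -/

/-- The word `x_a x_{a+1} … x_{a+len-1}` read in the bi-infinite sequence `x`. -/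
def factorWord {A : Type*} (x : ℤ → A) (a : ℤ) (len : ℕ) : List A :=
  (List.range len).map fun t => x (a + t)

/-- `tauIter τ n d a = (τ_n ∘ τ_{n+1} ∘ … ∘ τ_{n+d-1}) (a)`: the image of the letter `a`
of level `n + d` under the composition of the directive sequence down to level `n`.
In particular `tauIter τ 0 n` is `τ_{[0,n)}`. -/
def tauIter (τ : ℕ → ℕ → List ℕ) (n : ℕ) : ℕ → ℕ → List ℕ
  | 0, a => [a]
  | d + 1, a => (τ (n + d) a).flatMap (tauIter τ n d)

/-- The S-adic subshift generated by the directive sequence `τ` at level `n`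
(the level-`n` alphabet consists of the naturals `< m n`). -/
def SAdicLevel (m : ℕ → ℕ) (τ : ℕ → ℕ → List ℕ) (n : ℕ) : Set (ℤ → ℕ) :=
  {x | (∀ i, x i < m n) ∧
    ∀ (a : ℤ) (len : ℕ), ∃ N c, n < N ∧ c < m N ∧
      factorWord x a len <:+: tauIter τ n (N - n) c}

/-- The prescribed prefix `v_1² v_2² … v_{a}² v_{a+1} … v_{k+1}` in `0`-based letters:
letters `0, …, a-1` doubled, followed by the letters `a, …, k`. -/
def pkPrefix (k a : ℕ) : List ℕ :=
  (List.range a).flatMap (fun j => [j, j]) ++ (List.range (k + 1 - a)).map (fun j => a + j)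

/-- Property `(P_k)` for a directive sequence `τ` with alphabet sizes `m`: `τ₀` is a
(non-erasing) hat morphism and, for every `n ≥ 1`, `τ_n` is primitive, has the prescribed
prefixes, ends with the last letter of the level-`n` alphabet, and no image contains the
word (last letter)(first letter).  Level-`n` letters are `0, 1, …, m n - 1`, so the
letter `v_{i,n}` of the paper is `i - 1`. -/
def PropertyPk (k : ℕ) (m : ℕ → ℕ) (τ : ℕ → ℕ → List ℕ) : Prop :=
  (∀ n, 1 ≤ n → k < m n) ∧
  (∀ n a, a < m (n + 1) → τ n a ≠ [] ∧ ∀ c ∈ τ n a, c < m n) ∧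
  (∀ a b, a < m 1 → b < m 1 → a ≠ b → ∀ c, c ∈ τ 0 a → c ∉ τ 0 b) ∧
  (∀ n, 1 ≤ n → ∀ a, a < m (n + 1) → ∀ b, b < m n → b ∈ τ n a) ∧
  (∀ n, 1 ≤ n → ∀ a, a ≤ k → pkPrefix k a <+: τ n a) ∧
  (∀ n, 1 ≤ n → ∀ a, k < a → a < m (n + 1) → (List.replicate (a + 1) 0 ++ [1]) <+: τ n a) ∧
  (∀ n, 1 ≤ n → ∀ a, a < m (n + 1) →
    ([m n - 1] <:+ τ n a ∧ ¬ ([m n - 1, 0] <:+: τ n a)))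

/-- Property `(P_∞)`: as `(P_k)` but with `k` replaced by `n` at level `n`. -/
def PropertyPinf (m : ℕ → ℕ) (τ : ℕ → ℕ → List ℕ) : Prop :=
  (∀ n, 1 ≤ n → n < m n) ∧
  (∀ n a, a < m (n + 1) → τ n a ≠ [] ∧ ∀ c ∈ τ n a, c < m n) ∧
  (∀ a b, a < m 1 → b < m 1 → a ≠ b → ∀ c, c ∈ τ 0 a → c ∉ τ 0 b) ∧
  (∀ n, 1 ≤ n → ∀ a, a < m (n + 1) → ∀ b, b < m n → b ∈ τ n a) ∧
  (∀ n, 1 ≤ n → ∀ a, a ≤ n → pkPrefix n a <+: τ n a) ∧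
  (∀ n, 1 ≤ n → ∀ a, n < a → a < m (n + 1) → (List.replicate (a + 1) 0 ++ [1]) <+: τ n a) ∧
  (∀ n, 1 ≤ n → ∀ a, a < m (n + 1) →
    ([m n - 1] <:+ τ n a ∧ ¬ ([m n - 1, 0] <:+: τ n a)))

/-- The (integer) position in the concatenation `σ(y)` at which the block `σ(y_j)` starts,
the block `σ(y_0)` starting at position `0`. -/
def cumLen (σ : ℕ → List ℕ) (y : ℤ → ℕ) (j : ℤ) : ℤ :=
  if 0 ≤ j then ((List.range j.toNat).map fun t => ((σ (y t)).length : ℤ)).sum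
  else -(((List.range (-j).toNat).map fun t => ((σ (y (j + t))).length : ℤ)).sum)

/-- `x = S^r (σ(y))`, where `σ(y) = … σ(y_{-1}).σ(y_0) σ(y_1) …` is the concatenated image
of the bi-infinite sequence `y` (block `σ(y_0)` starting at coordinate `0`): for every `j`,
the word `σ(y_j)` is read in `x` starting at position `cumLen σ y j - r`. -/
def IsShiftedImage (σ : ℕ → List ℕ) (y : ℤ → ℕ) (r : ℤ) (x : ℤ → ℕ) : Prop :=
  ∀ j : ℤ, factorWord x (cumLen σ y j - r) (σ (y j)).length = σ (y j)

end AsympSOE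

/-!
Cut every point of `X_τ` along the level-`L` blocks `τ_{[0,L)}(d)`. Under `(P_k)` every `τ_n`
with `n ≥ 1` at least doubles lengths, and the image of the letter `d` has length at least
`d + 1`; hence `|τ_{[0,L)}(d)| ≥ (d + 1) 2^(L-2)`. A word of length `n` is therefore a factor of
a single block, or a factor of a block, followed by a sequence of full blocks `d₁ … d_r` with
`∑ (dᵢ + 1) ≤ n / 2^(L-2)`, followed by a factor of a block. There are at most `2^M` sequences of
naturals of weight `∑ (dᵢ + 1) ≤ M`, so `#L_n(X_τ) ≤ C_L 2^(n / 2^(L-2))`, and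
`h(X_τ) ≤ log 2 / 2^(L-2)` for every `L`.
-/

namespace List

variable {α β : Type*}

theorem finite_setOf_infix (l : List α) : {w | w <:+: l}.Finite :=
  l.sublists.finite_toSet.subset fun _ hw => mem_sublists.2 hw.sublist

theorem length_mul_le_length_flatMap {f : α → List β} {u : List α} {c : ℕ}
    (h : ∀ b ∈ u, c ≤ (f b).length) : u.length * c ≤ (u.flatMap f).length := by
  simpa [length_flatMap] using card_nsmul_le_sum (u.map fun b => (f b).length) c (by simpa)

theorem exists_eq_flatMap_append_of_prefix_flatMap {f : α → List β} {u : List α} {w : List β}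
    (h : w <+: u.flatMap f) :
    ∃ v p, v ⊆ u ∧ (p = [] ∨ ∃ b ∈ u, p <+: f b) ∧ w = v.flatMap f ++ p := by
  induction u generalizing w with
  | nil => exact ⟨[], [], nil_subset _, Or.inl rfl, by simpa using h⟩
  | cons a u ih =>
    rw [flatMap_cons] at h
    rcases prefix_or_prefix_of_prefix h (prefix_append _ _) with hw | ⟨w', rfl⟩
    · exact ⟨[], w, nil_subset _, Or.inr ⟨a, mem_cons_self, hw⟩, by simp⟩
    · obtain ⟨v, p, hv, hp, rfl⟩ := ih ((prefix_append_right_inj _).1 h)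
      refine ⟨a :: v, p, cons_subset_cons a hv, ?_, by simp⟩
      exact hp.imp_right fun ⟨b, hb, hbp⟩ => ⟨b, mem_cons_of_mem a hb, hbp⟩

theorem infix_flatMap_cases {f : α → List β} {u : List α} {w : List β}
    (h : w <:+: u.flatMap f) (hw : w ≠ []) :
    (∃ a ∈ u, w <:+: f a) ∨ ∃ a ∈ u, ∃ b ∈ u, ∃ s v p,
      s <:+ f a ∧ v ⊆ u ∧ p <+: f b ∧ w = s ++ v.flatMap f ++ p := by
  induction u with
  | nil => exact absurd (infix_nil.1 (by simpa using h)) hw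
  | cons a u ih =>
    rw [flatMap_cons, infix_append_iff] at h
    rcases h with h | h | ⟨s, w', rfl, hs, hw'⟩
    · exact Or.inl ⟨a, mem_cons_self, h⟩
    · rcases ih h with ⟨b, hb, hwb⟩ | ⟨b, hb, b', hb', s, v, p, hs, hv, hp, rfl⟩
      · exact Or.inl ⟨b, mem_cons_of_mem a hb, hwb⟩
      · exact Or.inr ⟨b, mem_cons_of_mem a hb, b', mem_cons_of_mem a hb', s, v, p, hs,
          List.Subset.trans hv (subset_cons_self a u), hp, rfl⟩
    · obtain ⟨v, p, hv, hp, rfl⟩ := exists_eq_flatMap_append_of_prefix_flatMap hw'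
      have hv' : v ⊆ a :: u := List.Subset.trans hv (subset_cons_self a u)
      rcases hp with rfl | ⟨b, hb, hbp⟩
      · exact Or.inr ⟨a, mem_cons_self, a, mem_cons_self, s, v, [], hs, hv', nil_prefix, by simp⟩
      · exact Or.inr ⟨a, mem_cons_self, b, mem_cons_of_mem a hb, s, v, p, hs, hv', hbp, by simp⟩

end List

namespace AsympSOE

open Set

def boundedWeightLists (M : ℕ) : Set (List ℕ) := {v | (v.map (· + 1)).sum ≤ M}

theorem encard_boundedWeightLists_le (M : ℕ) : (boundedWeightLists M).encard ≤ 2 ^ M := by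
  induction M with
  | zero =>
    have : boundedWeightLists 0 = {[]} := by
      ext (_ | ⟨d, t⟩) <;> simp [boundedWeightLists]
    simp [this]
  | succ M ih =>
    -- drop a leading `0`, or decrease a leading `d + 1` to `d`
    have hsub : boundedWeightLists (M + 1) ⊆
        List.cons 0 '' boundedWeightLists M ∪ List.modifyHead (· + 1) '' boundedWeightLists M := by
      rintro (_ | ⟨_ | d, t⟩) hv <;> simp only [boundedWeightLists, mem_ofPred_eq] at hv
      · exact Or.inr ⟨[], by simp [boundedWeightLists], rfl⟩
      · exact Or.inl ⟨t, by simp_all [boundedWeightLists]; omega, rfl⟩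
      · exact Or.inr ⟨d :: t, by simp_all [boundedWeightLists]; omega, rfl⟩
    calc (boundedWeightLists (M + 1)).encard
        ≤ (boundedWeightLists M).encard + (boundedWeightLists M).encard :=
          (encard_le_encard hsub).trans <| (encard_union_le _ _).trans <|
            add_le_add (encard_image_le _ _) (encard_image_le _ _)
      _ ≤ 2 ^ M + 2 ^ M := add_le_add ih ih
      _ = 2 ^ (M + 1) := by ring

theorem tendsto_div_nhds_zero_of_le_add_mul {a : ℕ → ℝ} (ha : ∀ n, 0 ≤ a n)
    (h : ∀ ε > 0, ∃ K, ∀ n, a n ≤ K + ε * n) : Tendsto (fun n => a n / n) atTop (𝓝 0) := by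
  refine tendsto_order.2 ⟨fun b hb => Eventually.of_forall fun n =>
    hb.trans_le (div_nonneg (ha n) n.cast_nonneg), fun ε hε => ?_⟩
  obtain ⟨K, hK⟩ := h (ε / 2) (half_pos hε)
  filter_upwards [(tendsto_const_div_atTop_nhds_zero_nat K).eventually_lt_const (half_pos hε),
    eventually_gt_atTop 0] with n hKn hn
  have hn' : (0 : ℝ) < n := by exact_mod_cast hn
  calc a n / n ≤ (K + ε / 2 * n) / n := by gcongr; exact hK n
    _ = K / n + ε / 2 := by field_simp
    _ < ε := by linarith

theorem tendsto_log_div_nhds_zero_of_le_mul_two_pow {a : ℕ → ℕ}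
    (h : ∀ j, ∃ C, ∀ n, a n ≤ C * 2 ^ (n / 2 ^ j)) :
    Tendsto (fun n => Real.log (a n) / n) atTop (𝓝 0) := by
  refine tendsto_div_nhds_zero_of_le_add_mul (fun n => Real.log_natCast_nonneg _) fun ε hε => ?_
  obtain ⟨j, hj⟩ := pow_unbounded_of_one_lt ε⁻¹ one_lt_two
  obtain ⟨C, hC⟩ := h j
  refine ⟨Real.log C, fun n => ?_⟩
  have hM : ((n / 2 ^ j : ℕ) : ℝ) ≤ ε * n := by
    have h1 : 1 ≤ 2 ^ j * ε := ((inv_lt_iff_one_lt_mul₀ hε).1 hj).le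
    calc ((n / 2 ^ j : ℕ) : ℝ) ≤ n / 2 ^ j := by exact_mod_cast Nat.cast_div_le
      _ ≤ ε * n := by
        rw [div_le_iff₀ (by positivity)]
        nlinarith [(Nat.cast_nonneg n : (0 : ℝ) ≤ n)]
  rcases (a n).eq_zero_or_pos with han | han
  · rw [han, Nat.cast_zero, Real.log_zero]
    have := Real.log_natCast_nonneg C
    positivity
  have hC0 : 0 < C := Nat.pos_of_mul_pos_right (han.trans_le (hC n))
  calc Real.log (a n) ≤ Real.log ((C : ℝ) * 2 ^ (n / 2 ^ j)) :=
        Real.log_le_log (by exact_mod_cast han) (by exact_mod_cast hC n)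
    _ = Real.log C + (n / 2 ^ j : ℕ) * Real.log 2 := by
        rw [Real.log_mul (by positivity) (by positivity), Real.log_pow]
    _ ≤ Real.log C + (n / 2 ^ j : ℕ) := by
        gcongr
        exact mul_le_of_le_one_right (Nat.cast_nonneg _)
          (Real.log_two_lt_d9.le.trans (by norm_num))
    _ ≤ Real.log C + ε * n := by gcongr

@[simp]
theorem tauIter_zero (τ : ℕ → ℕ → List ℕ) (n a : ℕ) : tauIter τ n 0 a = [a] := rfl

theorem tauIter_succ (τ : ℕ → ℕ → List ℕ) (n d a : ℕ) :
    tauIter τ n (d + 1) a = (τ (n + d) a).flatMap (tauIter τ n d) := rfl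

theorem tauIter_add (τ : ℕ → ℕ → List ℕ) (n d e a : ℕ) :
    tauIter τ n (d + e) a = (tauIter τ (n + d) e a).flatMap (tauIter τ n d) := by
  induction e generalizing a with
  | zero => simp only [add_zero, tauIter_zero, List.flatMap_singleton]
  | succ e ih =>
    rw [← add_assoc, tauIter_succ, tauIter_succ, List.flatMap_assoc, add_assoc n d e]
    exact List.flatMap_congr fun b _ => ih b

theorem tauIter_lt {m : ℕ → ℕ} {τ : ℕ → ℕ → List ℕ}
    (hτ : ∀ n a, a < m (n + 1) → ∀ c ∈ τ n a, c < m n) (n : ℕ) :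
    ∀ e a, a < m (n + e) → ∀ c ∈ tauIter τ n e a, c < m n
  | 0, a, ha, c, hc => by rw [tauIter_zero, List.mem_singleton] at hc; exact hc ▸ ha
  | e + 1, a, ha, c, hc => by
    obtain ⟨b, hb, hcb⟩ := List.mem_flatMap.1 (tauIter_succ τ n e a ▸ hc)
    exact tauIter_lt hτ n e b (hτ _ a ha b hb) c hcb

def blockFactors (m : ℕ → ℕ) (τ : ℕ → ℕ → List ℕ) (L : ℕ) : Set (List ℕ) :=
  {w | ∃ c < m L, w <:+: tauIter τ 0 L c}

theorem blockFactors_finite (m : ℕ → ℕ) (τ : ℕ → ℕ → List ℕ) (L : ℕ) :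
    (blockFactors m τ L).Finite :=
  ((finite_Iio (m L)).biUnion fun c _ => (tauIter τ 0 L c).finite_setOf_infix).subset
    fun _ ⟨_, hc, hw⟩ => mem_biUnion hc hw

namespace PropertyPk

variable {k : ℕ} {m : ℕ → ℕ} {τ : ℕ → ℕ → List ℕ}

theorem card_le_length (hP : PropertyPk k m τ) {n a : ℕ} (hn : 1 ≤ n) (ha : a < m (n + 1)) :
    m n ≤ (τ n a).length := by
  obtain ⟨-, -, -, hprim, -⟩ := hP
  calc m n = (Finset.range (m n)).card := (Finset.card_range _).symm
    _ ≤ (τ n a).toFinset.card := Finset.card_le_card fun b hb =>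
        List.mem_toFinset.2 (hprim n hn a ha b (Finset.mem_range.1 hb))
    _ ≤ (τ n a).length := List.toFinset_card_le _

theorem succ_le_length (hP : PropertyPk k m τ) {n a : ℕ} (hn : 1 ≤ n) (ha : a < m (n + 1)) :
    a + 1 ≤ (τ n a).length := by
  rcases le_or_gt a k with hak | hka
  · have hkm : k < m n := hP.1 n hn
    have := hP.card_le_length hn ha
    omega
  · have hlong := hP.2.2.2.2.2.1 n hn a hka ha
    have := hlong.length_le
    simp only [List.length_append, List.length_replicate, List.length_singleton] at this
    omega

theorem two_pow_le_length_tauIter (hk : 1 ≤ k) (hP : PropertyPk k m τ) {j c : ℕ}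
    (hc : c < m (j + 1)) : 2 ^ j ≤ (tauIter τ 0 (j + 1) c).length := by
  have hτ := hP.2.1
  induction j generalizing c with
  | zero => simpa [tauIter_succ, Nat.one_le_iff_ne_zero] using (hτ 0 c hc).1
  | succ j ih =>
    rw [tauIter_succ, zero_add, pow_succ']
    have h2 : 2 ≤ (τ (j + 1) c).length := by
      have hkm : k < m (j + 1) := hP.1 (j + 1) (by omega)
      have := hP.card_le_length (by omega) hc
      omega
    calc 2 * 2 ^ j ≤ (τ (j + 1) c).length * 2 ^ j := by gcongr
      _ ≤ _ := List.length_mul_le_length_flatMap fun b hb => ih ((hτ _ c hc).2 b hb)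

theorem succ_mul_two_pow_le_length_tauIter (hk : 1 ≤ k) (hP : PropertyPk k m τ) {j d : ℕ}
    (hd : d < m (j + 2)) : (d + 1) * 2 ^ j ≤ (tauIter τ 0 (j + 2) d).length := by
  rw [tauIter_succ, zero_add]
  calc (d + 1) * 2 ^ j ≤ (τ (j + 1) d).length * 2 ^ j := by
        gcongr; exact hP.succ_le_length (by omega) hd
    _ ≤ _ := List.length_mul_le_length_flatMap fun b hb =>
        hP.two_pow_le_length_tauIter hk ((hP.2.1 _ d hd).2 b hb)

theorem weight_mul_two_pow_le_length_flatMap (hk : 1 ≤ k) (hP : PropertyPk k m τ) {j : ℕ}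
    {v : List ℕ} (hv : ∀ d ∈ v, d < m (j + 2)) :
    (v.map (· + 1)).sum * 2 ^ j ≤ (v.flatMap (tauIter τ 0 (j + 2))).length := by
  rw [← List.sum_map_mul_right, List.length_flatMap]
  exact List.sum_le_sum fun d hd => hP.succ_mul_two_pow_le_length_tauIter hk (hv d hd)

theorem exists_infix_tauIter_of_le (hP : PropertyPk k m τ) {j L c : ℕ} (hj : 1 ≤ j)
    (hjL : j ≤ L) (hc : c < m j) : ∃ c' < m L, tauIter τ 0 j c <:+: tauIter τ 0 L c' := by
  obtain ⟨hkm, -, -, hprim, -⟩ := hP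
  induction L, hjL using Nat.le_induction with
  | base => exact ⟨c, hc, List.infix_refl _⟩
  | succ L hjL ih =>
    obtain ⟨c', hc', hinf⟩ := ih
    have h0 : 0 < m (L + 1) := by have := hkm (L + 1) (by omega); omega
    refine ⟨0, h0, hinf.trans ?_⟩
    rw [tauIter_succ, zero_add]
    exact List.infix_flatMap_of_mem (hprim L (by omega) 0 h0 c' hc') _

theorem langOf_subset (hk : 1 ≤ k) (hP : PropertyPk k m τ) (j n : ℕ) :
    langOf (SAdicLevel m τ 0) n ⊆ blockFactors m τ (j + 2) ∪
      (fun x : List ℕ × List ℕ × List ℕ => x.1 ++ x.2.1.flatMap (tauIter τ 0 (j + 2)) ++ x.2.2) ''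
        (blockFactors m τ (j + 2) ×ˢ boundedWeightLists (n / 2 ^ j) ×ˢ
          blockFactors m τ (j + 2)) := by
  rintro _ ⟨x, hx, a, rfl⟩
  obtain ⟨N, c, hN, hc, hw⟩ := hx.2 a n
  change factorWord x a n ∈ _
  set w := factorWord x a n
  rw [Nat.sub_zero] at hw
  rcases le_or_gt N (j + 2) with hNL | hLN
  · obtain ⟨c', hc', hcc'⟩ := hP.exists_infix_tauIter_of_le hN hNL hc
    exact Or.inl ⟨c', hc', hw.trans hcc'⟩
  obtain ⟨e, rfl⟩ := Nat.exists_eq_add_of_le hLN.le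
  rw [tauIter_add, zero_add] at hw
  have hlt := tauIter_lt (fun n a ha => (hP.2.1 n a ha).2) (j + 2) e c hc
  by_cases hw0 : w = []
  · have hkm : k < m (j + 2) := hP.1 (j + 2) (by omega)
    exact Or.inl ⟨0, by omega, hw0 ▸ List.nil_infix⟩
  rcases List.infix_flatMap_cases hw hw0 with
    ⟨b, hb, hwb⟩ | ⟨b, hb, b', hb', s, v, p, hs, hv, hp, hwv⟩
  · exact Or.inl ⟨b, hlt b hb, hwb⟩
  refine Or.inr ⟨(s, v, p), ⟨⟨b, hlt b hb, hs.isInfix⟩, ?_, ⟨b', hlt b' hb', hp.isInfix⟩⟩,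
    hwv.symm⟩
  rw [boundedWeightLists, mem_ofPred_eq, Nat.le_div_iff_mul_le (by positivity)]
  calc (v.map (· + 1)).sum * 2 ^ j ≤ (v.flatMap (tauIter τ 0 (j + 2))).length :=
        hP.weight_mul_two_pow_le_length_flatMap hk fun d hd => hlt d (hv hd)
    _ ≤ w.length := by rw [hwv]; simp only [List.length_append]; omega
    _ = n := by simp [w, factorWord]

theorem complexityOf_le (hk : 1 ≤ k) (hP : PropertyPk k m τ) (j : ℕ) :
    ∃ C, ∀ n, complexityOf (SAdicLevel m τ 0) n ≤ C * 2 ^ (n / 2 ^ j) := by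
  refine ⟨((blockFactors m τ (j + 2)).ncard + 1) ^ 2, fun n => ?_⟩
  have hsub := hP.langOf_subset hk j n
  have hB := blockFactors_finite m τ (j + 2)
  generalize blockFactors m τ (j + 2) = B at hsub hB ⊢
  generalize n / 2 ^ j = M at hsub ⊢
  have hcount : (langOf (SAdicLevel m τ 0) n).encard ≤
      B.ncard + B.ncard * (2 ^ M * B.ncard) := by
    calc _ ≤ B.encard + (B ×ˢ boundedWeightLists M ×ˢ B).encard :=
          (encard_le_encard hsub).trans <|
            (encard_union_le _ _).trans (add_le_add le_rfl (encard_image_le _ _))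
      _ ≤ _ := by
          rw [encard_prod, encard_prod, hB.cast_ncard_eq]
          gcongr
          exact encard_boundedWeightLists_le M
  have hbound : B.ncard + B.ncard * (2 ^ M * B.ncard) ≤ (B.ncard + 1) ^ 2 * 2 ^ M := by
    nlinarith [Nat.one_le_two_pow (n := M)]
  exact (encard_le_coe_iff_finite_ncard_le.1 (hcount.trans (by exact_mod_cast hbound))).2

end PropertyPk

/-- Under Property `(P_k)`, the S-adic subshift `(X_τ, S)` has
topological entropy zero: `(1/n) log #L_n(X_τ) → 0`. -/
theorem entropy_zero_of_propertyPk
    (k : ℕ) (hk : 1 ≤ k) (m : ℕ → ℕ) (τ : ℕ → ℕ → List ℕ) (hP : PropertyPk k m τ) :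
    Filter.Tendsto
      (fun n : ℕ => Real.log (complexityOf (SAdicLevel m τ 0) n) / n)
      Filter.atTop (nhds 0) :=
  tendsto_log_div_nhds_zero_of_le_mul_two_pow fun j => hP.complexityOf_le hk j

end AsympSOE
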